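/- Let a, b ∈ ℂ with |a|² + |b|² = 1 and let U be the qubit unitary U = [[a, b], [−conj(b), conj(a)]]. Then the de-cohering power of U in the l1-coherence equals 1 − ||a|² − |b|²|: the value 1 − ||a|² − |b|²| is the greatest element of the set { 1 − C_{l1}(U ψ_θ ψ_θ† U†) : θ ∈ ℝ }, where ψ_θ ranges over the maximally coherent qubit states. -/

import Mathlib

open Matrix BigOperators ComplexOrder

/-- The l1-coherence of a matrix: the sum of the absolute values of its
off-diagonal entries. -/
noncomputable def Cl1 {n : ℕ} (A : Matrix (Fin n) (Fin n) ℂ) : ℝ :=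
  ∑ i, ∑ j, if i ≠ j then ‖A i j‖ else 0

/-- A density matrix: positive semidefinite with trace 1. -/
def IsDensity {n : ℕ} (ρ : Matrix (Fin n) (Fin n) ℂ) : Prop :=
  ρ.PosSemidef ∧ ρ.trace = 1

/-- A quantum operation (CPTP map) given by a finite family of Kraus operators. -/
def IsQuantumOp {n : ℕ} (Φ : Matrix (Fin n) (Fin n) ℂ → Matrix (Fin n) (Fin n) ℂ) : Prop :=
  ∃ (m : ℕ) (K : Fin m → Matrix (Fin n) (Fin n) ℂ),
    (∑ i, (K i)ᴴ * K i) = 1 ∧ ∀ ρ, Φ ρ = ∑ i, K i * ρ * (K i)ᴴ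

/-- The dephasing map `Δ`, keeping only the diagonal part of a matrix. -/
def Deph {n : ℕ} (A : Matrix (Fin n) (Fin n) ℂ) : Matrix (Fin n) (Fin n) ℂ :=
  Matrix.of fun i j => if i = j then A i j else 0

/-- The maximally coherent qubit state vector `(1/√2)(1, e^{iθ})`. -/
noncomputable def psi (θ : ℝ) : Fin 2 → ℂ :=
  ![1 / (Real.sqrt 2 : ℂ), Complex.exp (θ * Complex.I) / (Real.sqrt 2 : ℂ)]

/-- The outer product `w w†` of a vector with itself. -/
def outer {n : ℕ} (w : Fin n → ℂ) : Matrix (Fin n) (Fin n) ℂ :=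
  Matrix.vecMulVec w (star w)

/-- The qubit unitary `[[a, b], [-conj b, conj a]]`. -/
def Uab (a b : ℂ) : Matrix (Fin 2) (Fin 2) ℂ :=
  !![a, b; -(starRingEnd ℂ) b, (starRingEnd ℂ) a]

/-- The binary entropy (base 2), with the convention `0 · log 0 = 0`. -/
noncomputable def H (x : ℝ) : ℝ :=
  -(x * Real.logb 2 x) - (1 - x) * Real.logb 2 (1 - x)

/-!
Write `e = exp (iθ)`. Then `U ψ_θ = ((a + b e), (conj a · e - conj b)) / √2`, and the l1-coherence
of the pure state `v v†` is `2 |v₀| |v₁|`. Multiplying by the unimodular `e` and conjugating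
gives `|conj a · e - conj b| = |a - b e|`, so the coherence is `|a + b e| |a - b e| = |a² - b² e²|`.
By the reverse triangle inequality this is at least `||a|² - |b|²|`, with equality when `e²`
rotates `b²` onto the direction of `a²`.
-/

open Complex ComplexConjugate

lemma Cl1_outer_fin_two (v : Fin 2 → ℂ) : Cl1 (outer v) = 2 * (‖v 0‖ * ‖v 1‖) := by
  simp [Cl1, outer, Fin.sum_univ_two, vecMulVec_apply, two_mul, mul_comm]

lemma norm_conj_mul_sub_conj {u : ℂ} (hu : ‖u‖ = 1) (a b : ℂ) :
    ‖conj a * u - conj b‖ = ‖a - b * u‖ := by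
  have hu' : conj u * u = 1 := by rw [conj_mul', hu]; norm_num
  calc ‖conj a * u - conj b‖ = ‖(a * conj u - b) * u‖ := by
        rw [← Complex.norm_conj, norm_mul, hu, mul_one]; simp
    _ = ‖a - b * u‖ := by rw [sub_mul, mul_assoc, hu', mul_one]

lemma Cl1_outer_Uab_mulVec_psi (a b : ℂ) (θ : ℝ) :
    Cl1 (outer (Uab a b *ᵥ psi θ)) = ‖a ^ 2 - b ^ 2 * exp (↑(2 * θ) * I)‖ := by
  set e := exp (θ * I)
  have he : ‖e‖ = 1 := norm_exp_ofReal_mul_I θ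
  have he2 : exp (↑(2 * θ) * I) = e ^ 2 := by
    rw [← Complex.exp_nat_mul]; push_cast; ring_nf
  have hsqrt2 : ‖((Real.sqrt 2 : ℝ) : ℂ)‖ ^ 2 = 2 := by simp
  have hv : Uab a b *ᵥ psi θ =
      ![(a + b * e) / (Real.sqrt 2 : ℂ), (conj a * e - conj b) / (Real.sqrt 2 : ℂ)] := by
    ext i; fin_cases i <;> simp [Uab, psi, mulVec, e, add_mul, sub_mul, mul_assoc, div_eq_mul_inv,
      neg_add_eq_sub]
  rw [Cl1_outer_fin_two, hv, he2]
  simp only [cons_val_zero, cons_val_one, norm_div, norm_conj_mul_sub_conj he]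
  rw [div_mul_div_comm, ← sq, hsqrt2, mul_div_cancel₀ _ two_ne_zero, ← norm_mul]
  congr 1; ring

lemma exists_norm_sub_mul_exp_eq_abs (z w : ℂ) :
    ∃ φ : ℝ, ‖z - w * exp (φ * I)‖ = |‖z‖ - ‖w‖| := by
  refine ⟨arg z - arg w, ?_⟩
  have hrot : w * exp (↑(arg z - arg w) * I) = ‖w‖ * exp (arg z * I) := by
    nth_rw 1 [← norm_mul_exp_arg_mul_I w]
    rw [mul_assoc, ← Complex.exp_add]
    congr 2; push_cast; ring
  have hdiff : z - w * exp (↑(arg z - arg w) * I) = ↑(‖z‖ - ‖w‖) * exp (arg z * I) := by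
    rw [hrot]; nth_rw 1 [← norm_mul_exp_arg_mul_I z]; push_cast; ring
  rw [hdiff, norm_mul, norm_exp_ofReal_mul_I, mul_one, norm_real, Real.norm_eq_abs]

theorem decohering_power_l1_qubit_unitary
    (a b : ℂ) :
    IsGreatest
      {x : ℝ | ∃ θ : ℝ, x = 1 - Cl1 (outer ((Uab a b).mulVec (psi θ)))}
      (1 - |‖a‖ ^ 2 - ‖b‖ ^ 2|) := by
  simp_rw [Cl1_outer_Uab_mulVec_psi]
  constructor
  · obtain ⟨φ, hφ⟩ := exists_norm_sub_mul_exp_eq_abs (a ^ 2) (b ^ 2)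
    refine ⟨φ / 2, ?_⟩
    rw [mul_div_cancel₀ φ two_ne_zero, hφ, norm_pow, norm_pow]
  · rintro _ ⟨θ, rfl⟩
    have h := abs_norm_sub_norm_le (a ^ 2) (b ^ 2 * exp (↑(2 * θ) * I))
    rw [norm_mul, norm_exp_ofReal_mul_I, mul_one, norm_pow, norm_pow] at h
    linarith
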